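/- arXiv:2601.22513 — 7 statements merged into one kernel-verified Lean document; each statement's English description precedes it below -/
import Mathlib

section
/- There exist a nonempty finite alphabet V, a horizon H ≥ 2, and a probability mass function π on the set V^H of length-H sequences with the following properties: (i) π has a unique mode y* ∈ V^H, i.e. π(y*) > π(y) for every y ≠ y*; (ii) π(y*) ≤ 1/2; (iii) the greedy sequence ŷ ∈ V^H, defined coordinatewise for h = 1,…,H by letting ŷ_h be a maximizer over v ∈ V of the prefix-marginal probability π({y ∈ V^H : y_i = ŷ_i for all i < h and y_h = v}), has a unique maximizer at every step h, and satisfies ŷ ≠ y*. -/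
/-! Greedy decoding maximizes the marginal of the first symbol, whereas the mode maximizes the
joint probability.  With two binary steps, let the mode `(false, false)` carry `2/5` while the
first symbol `true` carries `7/20 + 1/4 = 3/5` spread over two continuations, each below `2/5`:
greedy commits to `true` and then decodes `(true, false)`. -/

/-- The probability that a sequence agrees with the prefix `yhat₁,…,yhat_{h-1}`
and has symbol `v` at position `h`. -/
noncomputable def prefixProb {V : Type*} {H : ℕ} (π : (Fin H → V) → ℝ)
    (yhat : Fin H → V) (h : Fin H) (v : V) : ℝ :=
  ∑' y : {y : Fin H → V // (∀ i : Fin H, i < h → y i = yhat i) ∧ y h = v}, π y.1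

section prefixProb

variable {V : Type*}

theorem prefixProb_zero {n : ℕ} (π : (Fin (n + 1) → V) → ℝ) (yhat : Fin (n + 1) → V) (v : V) :
    prefixProb π yhat 0 v = ∑' t : Fin n → V, π (Fin.cons v t) := by
  let e : (Fin n → V) ≃
      {y : Fin (n + 1) → V // (∀ i : Fin (n + 1), i < 0 → y i = yhat i) ∧ y 0 = v} :=
    { toFun := fun t => ⟨Fin.cons v t, fun i hi => absurd hi (Fin.not_lt_zero i), rfl⟩
      invFun := fun y => Fin.tail y.1
      left_inv := fun t => rfl
      right_inv := fun ⟨y, _, hy⟩ => by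
        subst hy
        exact Subtype.ext (Fin.cons_self_tail y) }
  exact (e.tsum_eq fun y => π y.1).symm

theorem prefixProb_last {n : ℕ} (π : (Fin (n + 1) → V) → ℝ) (yhat : Fin (n + 1) → V) (v : V) :
    prefixProb π yhat (Fin.last n) v = π (Function.update yhat (Fin.last n) v) := by
  have hunique : ∀ y : Fin (n + 1) → V,
      ((∀ i, i < Fin.last n → y i = yhat i) ∧ y (Fin.last n) = v) ↔
        y = Function.update yhat (Fin.last n) v := by
    intro y
    constructor
    · rintro ⟨hprefix, hlast⟩
      funext i
      rcases eq_or_ne i (Fin.last n) with rfl | hi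
      · simpa using hlast
      · simpa [hi] using hprefix i (Fin.lt_last_iff_ne_last.2 hi)
    · rintro rfl
      exact ⟨fun i hi => Function.update_of_ne hi.ne _ _, Function.update_self _ _ _⟩
  let y₀ := Function.update yhat (Fin.last n) v
  rw [prefixProb, tsum_eq_single ⟨y₀, (hunique y₀).2 rfl⟩]
  rintro ⟨y, hy⟩ hne
  exact absurd (Subtype.ext ((hunique y).1 hy)) hne

end prefixProb

section pairModel

variable {V : Type*}

def pairModel (q : V × V → ℝ) (y : Fin 2 → V) : ℝ :=
  q (y 0, y 1)

theorem tsum_pairModel (q : V × V → ℝ) : ∑' y, pairModel q y = ∑' x, q x :=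
  (piFinTwoEquiv fun _ => V).tsum_eq q

theorem prefixProb_pairModel_zero (q : V × V → ℝ) (yhat : Fin 2 → V) (v : V) :
    prefixProb (pairModel q) yhat 0 v = ∑' w, q (v, w) := by
  rw [prefixProb_zero]
  exact (Equiv.funUnique (Fin 1) V).tsum_eq fun w => q (v, w)

theorem prefixProb_pairModel_one (q : V × V → ℝ) (yhat : Fin 2 → V) (v : V) :
    prefixProb (pairModel q) yhat 1 v = q (yhat 0, v) := by
  rw [show (1 : Fin 2) = Fin.last 1 from rfl, prefixProb_last]
  simp [pairModel]

end pairModel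

noncomputable def unalignedModel : Bool × Bool → ℝ
  | (false, false) => 2 / 5
  | (false, true) => 0
  | (true, false) => 7 / 20
  | (true, true) => 1 / 4

theorem unalignedModel_nonneg (x : Bool × Bool) : 0 ≤ unalignedModel x := by
  rcases x with ⟨_ | _, _ | _⟩ <;> norm_num [unalignedModel]

theorem tsum_unalignedModel : ∑' x, unalignedModel x = 1 := by
  rw [tsum_fintype]
  norm_num [Fintype.sum_prod_type, unalignedModel]

theorem unalignedModel_lt_mode {x : Bool × Bool} (hx : x ≠ (false, false)) :
    unalignedModel x < unalignedModel (false, false) := by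
  rcases x with ⟨_ | _, _ | _⟩
  · exact absurd rfl hx
  all_goals norm_num [unalignedModel]

/-- There exist a nonempty finite alphabet `V`, a horizon `H ≥ 2`, and a probability mass
function `π` on `V^H` with a unique mode `y*` of probability at most `1/2`, such that the
greedy sequence `ŷ` (the unique stepwise maximizer of the prefix-marginal probabilities)
differs from `y*`. -/
theorem greedy_decoding_fails_for_unaligned_models :
    ∃ (V : Type) (_ : Finite V) (_ : Nonempty V) (H : ℕ), 2 ≤ H ∧
      ∃ (π : (Fin H → V) → ℝ) (ystar yhat : Fin H → V),
        (∀ y, 0 ≤ π y) ∧ (∑' y, π y = 1) ∧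
        (∀ y, y ≠ ystar → π y < π ystar) ∧
        π ystar ≤ 1 / 2 ∧
        (∀ (h : Fin H) (v : V), v ≠ yhat h →
          prefixProb π yhat h v < prefixProb π yhat h (yhat h)) ∧
        yhat ≠ ystar := by
  refine ⟨Bool, inferInstance, inferInstance, 2, le_rfl, pairModel unalignedModel,
    ![false, false], ![true, false], fun y => unalignedModel_nonneg _,
    (tsum_pairModel _).trans tsum_unalignedModel, ?_, by norm_num [pairModel, unalignedModel],
    ?_, by simp⟩
  · exact fun y hy => unalignedModel_lt_mode fun h => hy ((piFinTwoEquiv fun _ => Bool).injective h)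
  · intro h v hv
    fin_cases h
    · have hv : v = false := by simpa using hv
      subst hv
      norm_num [prefixProb_pairModel_zero, unalignedModel]
    · have hv : v = true := by simpa using hv
      subst hv
      norm_num [prefixProb_pairModel_one, unalignedModel]
end

section
/- For every policy π₁ and every δ ∈ (0,1), the measure of the failure set satisfies μ({x ∈ X : π₁(y₀*(x) | x) ≤ 1 − δ}) ≤ (J₀(π₁*) − J₀(π₁)) / (γ · δ). -/
/-!
Pointwise, the gap `∑_y π₁(y|x) (log π₀(y₀*|x) - log π₀(y|x))` between the integrands of
`J₀(π₁*)` and `J₀(π₁)` is at least `γ (1 - π₁(y₀*|x))`, because every `y ≠ y₀*` costs at least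
the margin `γ`. On the failure set this is at least `γ δ`, so Markov's inequality applied to the
nonnegative gap bounds the measure of the failure set by `(J₀(π₁*) - J₀(π₁)) / (γ δ)`.
-/

open MeasureTheory

/-- The objective `J₀(π) = E_{x∼μ}[ Σ_y π(y|x) log π₀(y|x) ]`. -/
noncomputable def J0 {X Y : Type*} [MeasurableSpace X] [Fintype Y]
    (μ : Measure X) (π₀ π : X → Y → ℝ) : ℝ :=
  ∫ x, ∑ y, π x y * Real.log (π₀ x y) ∂μ

open Finset Real

theorem mul_one_sub_le_sum_mul {Y : Type*} [Fintype Y] {p c : Y → ℝ} {a : Y} {γ : ℝ}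
    (hp : ∀ y, 0 ≤ p y) (hp_sum : ∑ y, p y = 1) (hca : c a = 0) (hc : ∀ y ≠ a, γ ≤ c y) :
    γ * (1 - p a) ≤ ∑ y, p y * c y := by
  classical
  calc γ * (1 - p a) = ∑ y ∈ univ.erase a, p y * γ := by
        rw [← sum_mul, ← hp_sum, ← sum_erase_add _ _ (mem_univ a)]
        ring
    _ ≤ ∑ y ∈ univ.erase a, p y * c y :=
        sum_le_sum fun y hy => mul_le_mul_of_nonneg_left (hc y (ne_of_mem_erase hy)) (hp y)
    _ = ∑ y, p y * c y := by
        rw [← sum_erase_add _ _ (mem_univ a), hca, mul_zero, add_zero]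

theorem sum_mul_log_div {Y : Type*} [Fintype Y] {p q : Y → ℝ} (a : Y)
    (hp_sum : ∑ y, p y = 1) (hq : ∀ y, 0 < q y) :
    ∑ y, p y * log (q a / q y) = log (q a) - ∑ y, p y * log (q y) := by
  calc ∑ y, p y * log (q a / q y) = ∑ y, (p y * log (q a) - p y * log (q y)) :=
        sum_congr rfl fun y _ => by rw [log_div (hq a).ne' (hq y).ne', mul_sub]
    _ = log (q a) - ∑ y, p y * log (q y) := by
        rw [sum_sub_distrib, ← sum_mul, hp_sum, one_mul]

theorem measureReal_le_integral_div_of_subset {α : Type*} [MeasurableSpace α] {μ : Measure α}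
    {f : α → ℝ} {s : Set α} {ε : ℝ} (hf : 0 ≤ᵐ[μ] f) (hf_int : Integrable f μ) (hε : 0 < ε)
    (hs : s ⊆ {x | ε ≤ f x}) :
    μ.real s ≤ (∫ x, f x ∂μ) / ε := by
  rw [le_div_iff₀ hε, mul_comm]
  calc ε * μ.real s ≤ ε * μ.real {x | ε ≤ f x} :=
        mul_le_mul_of_nonneg_left (measureReal_mono hs (hf_int.measure_ge_lt_top hε).ne) hε.le
    _ ≤ ∫ x, f x ∂μ := mul_meas_ge_le_integral_of_nonneg hf hf_int ε

theorem failure_prob_le_performance_gap_general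
    {X : Type*} [MeasurableSpace X] (μ : Measure X)
    {Y : Type*} [Fintype Y] [DecidableEq Y]
    (π₀ π₁ : X → Y → ℝ) (y0star : X → Y) (γ : ℝ)
    (hπ₀pos : ∀ x y, 0 < π₀ x y)
    (hπ₁nonneg : ∀ x y, 0 ≤ π₁ x y) (hπ₁sum : ∀ x, ∑ y, π₁ x y = 1)
    (hγ : 0 < γ)
    (hmargin : ∀ x y, y ≠ y0star x → γ ≤ Real.log (π₀ x (y0star x) / π₀ x y))
    (hInt₁ : Integrable (fun x => ∑ y, π₁ x y * Real.log (π₀ x y)) μ)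
    (hIntstar : Integrable
      (fun x => ∑ y, (if y = y0star x then (1 : ℝ) else 0) * Real.log (π₀ x y)) μ)
    (δ : ℝ) (hδ : δ ∈ Set.Ioo (0 : ℝ) 1) :
    (μ {x | π₁ x (y0star x) ≤ 1 - δ}).toReal ≤
      (J0 μ π₀ (fun x y => if y = y0star x then (1 : ℝ) else 0) - J0 μ π₀ π₁) / (γ * δ) := by
  set g : X → ℝ := fun x => ∑ y, (if y = y0star x then (1 : ℝ) else 0) * log (π₀ x y) -
    ∑ y, π₁ x y * log (π₀ x y)
  have hg_eq (x : X) : g x = ∑ y, π₁ x y * log (π₀ x (y0star x) / π₀ x y) := by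
    simp [g, sum_mul_log_div _ (hπ₁sum x) (hπ₀pos x)]
  have hg_lower (x : X) : γ * (1 - π₁ x (y0star x)) ≤ g x := hg_eq x ▸
    mul_one_sub_le_sum_mul (hπ₁nonneg x) (hπ₁sum x) (by simp [div_self (hπ₀pos x _).ne'])
      (hmargin x)
  have hg_nonneg (x : X) : 0 ≤ g x := by
    have hle_one : π₁ x (y0star x) ≤ 1 :=
      hπ₁sum x ▸ single_le_sum (fun y _ => hπ₁nonneg x y) (mem_univ _)
    exact (mul_nonneg hγ.le (sub_nonneg.2 hle_one)).trans (hg_lower x)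
  have hfailure : {x | π₁ x (y0star x) ≤ 1 - δ} ⊆ {x | γ * δ ≤ g x} := fun x hx =>
    (mul_le_mul_of_nonneg_left (le_sub_comm.1 hx) hγ.le).trans (hg_lower x)
  have hgap : ∫ x, g x ∂μ =
      J0 μ π₀ (fun x y => if y = y0star x then (1 : ℝ) else 0) - J0 μ π₀ π₁ :=
    integral_sub hIntstar hInt₁
  rw [← hgap]
  exact measureReal_le_integral_div_of_subset (ae_of_all _ hg_nonneg) (hIntstar.sub hInt₁)
    (mul_pos hγ hδ.1) hfailure

/-- From performance gap to suboptimality probability: for every policy `π₁` and every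
`δ ∈ (0,1)`, the measure of the failure set `{x : π₁(y₀*(x)|x) ≤ 1 − δ}` is at most
`(J₀(π₁*) − J₀(π₁)) / (γ δ)`, where `π₁*` is the deterministic policy at `y₀*`. -/
theorem failure_prob_le_performance_gap
    {X : Type*} [MeasurableSpace X] (μ : Measure X) [IsProbabilityMeasure μ]
    {Y : Type*} [Fintype Y] [Nonempty Y] [DecidableEq Y] [MeasurableSpace Y]
    (π₀ π₁ : X → Y → ℝ) (y0star : X → Y) (γ : ℝ)
    (hπ₀meas : ∀ y, Measurable fun x => π₀ x y)
    (hπ₁meas : ∀ y, Measurable fun x => π₁ x y)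
    (hystarmeas : Measurable y0star)
    (hπ₀pos : ∀ x y, 0 < π₀ x y) (hπ₀sum : ∀ x, ∑ y, π₀ x y = 1)
    (hπ₁nonneg : ∀ x y, 0 ≤ π₁ x y) (hπ₁sum : ∀ x, ∑ y, π₁ x y = 1)
    (hmax : ∀ x y, y ≠ y0star x → π₀ x y < π₀ x (y0star x))
    (hγ : 0 < γ)
    (hmargin : ∀ x y, y ≠ y0star x → γ ≤ Real.log (π₀ x (y0star x) / π₀ x y))
    (hInt₁ : Integrable (fun x => ∑ y, π₁ x y * Real.log (π₀ x y)) μ)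
    (hIntstar : Integrable
      (fun x => ∑ y, (if y = y0star x then (1 : ℝ) else 0) * Real.log (π₀ x y)) μ)
    (δ : ℝ) (hδ : δ ∈ Set.Ioo (0 : ℝ) 1) :
    (μ {x | π₁ x (y0star x) ≤ 1 - δ}).toReal ≤
      (J0 μ π₀ (fun x y => if y = y0star x then (1 : ℝ) else 0) - J0 μ π₀ π₁) / (γ * δ) :=
  failure_prob_le_performance_gap_general μ π₀ π₁ y0star γ hπ₀pos hπ₁nonneg hπ₁sum hγ hmargin hInt₁
    hIntstar δ hδ
end

section
/- For every probability mass function p on Y, one has Σ_y p(y) log q(y) − β·KL(p‖q) ≤ Σ_y p_β*(y) log q(y) − β·KL(p_β*‖q), with equality if and only if p = p_β*. In particular, p_β* is the unique maximizer over probability mass functions p on Y of the entropy-regularized objective p ↦ E_{y∼p}[log q(y)] − β·KL(p‖q). -/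
/-!
Writing `Z = ∑ q^(1+1/β)`, we have `log q = (β/(1+β)) (log p_β* + log Z)`, and a direct computation
turns the objective into `β log Z - β KL(p‖p_β*)` for every probability mass function `p`.
Gibbs' inequality `KL(p‖p_β*) ≥ 0`, with equality only at `p = p_β*`, finishes the proof.
-/

open Real InformationTheory Finset

/-- The sharpened (entropy-regularized optimal) distribution
`p_β*(y) = q(y)^{1+1/β} / Σ_{y'} q(y')^{1+1/β}`. -/
noncomputable def sharpened {Y : Type*} [Fintype Y] (q : Y → ℝ) (β : ℝ) (y : Y) : ℝ :=
  q y ^ (1 + 1 / β) / ∑ y' : Y, q y' ^ (1 + 1 / β)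

lemma mul_log_div_eq_mul_klFun_add {p r : ℝ} (hr : r ≠ 0) :
    p * log (p / r) = r * klFun (p / r) + (p - r) := by
  rw [klFun_apply]
  field_simp
  ring

section Gibbs

variable {ι : Type*} {s : Finset ι} {p r : ι → ℝ}

lemma sum_mul_log_div_eq_sum_mul_klFun (hr : ∀ i ∈ s, r i ≠ 0)
    (hsum : ∑ i ∈ s, p i = ∑ i ∈ s, r i) :
    ∑ i ∈ s, p i * log (p i / r i) = ∑ i ∈ s, r i * klFun (p i / r i) := by
  rw [sum_congr rfl fun i hi => mul_log_div_eq_mul_klFun_add (hr i hi), sum_add_distrib,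
    sum_sub_distrib, hsum, sub_self, add_zero]

lemma sum_mul_log_div_nonneg (hp : ∀ i ∈ s, 0 ≤ p i) (hr : ∀ i ∈ s, 0 < r i)
    (hsum : ∑ i ∈ s, p i = ∑ i ∈ s, r i) :
    0 ≤ ∑ i ∈ s, p i * log (p i / r i) := by
  rw [sum_mul_log_div_eq_sum_mul_klFun (fun i hi => (hr i hi).ne') hsum]
  exact sum_nonneg fun i hi =>
    mul_nonneg (hr i hi).le (klFun_nonneg (div_nonneg (hp i hi) (hr i hi).le))

lemma sum_mul_log_div_eq_zero_iff (hp : ∀ i ∈ s, 0 ≤ p i) (hr : ∀ i ∈ s, 0 < r i)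
    (hsum : ∑ i ∈ s, p i = ∑ i ∈ s, r i) :
    ∑ i ∈ s, p i * log (p i / r i) = 0 ↔ ∀ i ∈ s, p i = r i := by
  have hterm : ∀ i ∈ s, r i * klFun (p i / r i) = 0 ↔ p i = r i := fun i hi => by
    rw [mul_eq_zero_iff_left (hr i hi).ne',
      klFun_eq_zero_iff (div_nonneg (hp i hi) (hr i hi).le), div_eq_one_iff_eq (hr i hi).ne']
  rw [sum_mul_log_div_eq_sum_mul_klFun (fun i hi => (hr i hi).ne') hsum,
    sum_eq_zero_iff_of_nonneg fun i hi =>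
      mul_nonneg (hr i hi).le (klFun_nonneg (div_nonneg (hp i hi) (hr i hi).le))]
  exact forall₂_congr hterm

end Gibbs

namespace Sharpened

noncomputable def regularizedObjective {Y : Type*} [Fintype Y] (q : Y → ℝ) (β : ℝ)
    (p : Y → ℝ) : ℝ :=
  ∑ y, p y * log (q y) - β * ∑ y, p y * log (p y / q y)

variable {Y : Type*} [Fintype Y] [Nonempty Y] {q : Y → ℝ} {β : ℝ}

lemma normalizer_pos (hq : ∀ y, 0 < q y) : 0 < ∑ y, q y ^ (1 + 1 / β) :=
  sum_pos (fun y _ => rpow_pos_of_pos (hq y) _) univ_nonempty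

lemma sharpened_pos (hq : ∀ y, 0 < q y) (y : Y) : 0 < sharpened q β y :=
  div_pos (rpow_pos_of_pos (hq y) _) (normalizer_pos hq)

lemma sum_sharpened (hq : ∀ y, 0 < q y) : ∑ y, sharpened q β y = 1 := by
  simp only [sharpened]
  rw [← sum_div, div_self (normalizer_pos hq).ne']

lemma log_div_sharpened (hq : ∀ y, 0 < q y) (y : Y) :
    log (q y / sharpened q β y) = log (∑ y, q y ^ (1 + 1 / β)) - 1 / β * log (q y) := by
  rw [log_div (hq y).ne' (sharpened_pos hq y).ne', sharpened,
    log_div (rpow_pos_of_pos (hq y) _).ne' (normalizer_pos hq).ne', log_rpow (hq y)]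
  ring

lemma regularizedObjective_eq (hq : ∀ y, 0 < q y) (hβ : β ≠ 0) {p : Y → ℝ}
    (hp : ∑ y, p y = 1) :
    regularizedObjective q β p = β * log (∑ y, q y ^ (1 + 1 / β))
      - β * ∑ y, p y * log (p y / sharpened q β y) := by
  -- `log (p/q) = log (p/p_β*) + log (p_β*/q)`, and the second summand is affine in `log q`.
  have hterm : ∀ y ∈ univ, p y * log (q y) - β * (p y * log (p y / q y))
      = β * log (∑ y, q y ^ (1 + 1 / β)) * p y - β * (p y * log (p y / sharpened q β y)) :=
    fun y _ => by
      rcases eq_or_ne (p y) 0 with h | h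
      · simp [h]
      · have hlog := log_div_sharpened (β := β) hq y
        rw [log_div (hq y).ne' (sharpened_pos hq y).ne'] at hlog
        rw [log_div h (hq y).ne', log_div h (sharpened_pos hq y).ne']
        linear_combination (norm := skip) (β * p y) * hlog
        field_simp
        ring
  rw [regularizedObjective, mul_sum, ← sum_sub_distrib, sum_congr rfl hterm, sum_sub_distrib,
    ← mul_sum, ← mul_sum, hp, mul_one]

end Sharpened

open Sharpened in
theorem sharpened_is_unique_maximizer_general {Y : Type*} [Fintype Y] [Nonempty Y]
    (q : Y → ℝ) (β : ℝ) (hqpos : ∀ y, 0 < q y) (hβ : 0 < β)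
    (p : Y → ℝ) (hp : ∀ y, 0 ≤ p y) (hpsum : ∑ y, p y = 1) :
    ((∑ y, p y * Real.log (q y)) - β * ∑ y, p y * Real.log (p y / q y)
        ≤ (∑ y, sharpened q β y * Real.log (q y))
          - β * ∑ y, sharpened q β y * Real.log (sharpened q β y / q y))
    ∧ ((∑ y, p y * Real.log (q y)) - β * ∑ y, p y * Real.log (p y / q y)
        = (∑ y, sharpened q β y * Real.log (q y))
          - β * ∑ y, sharpened q β y * Real.log (sharpened q β y / q y)
        ↔ p = sharpened q β) := by
  change regularizedObjective q β p ≤ regularizedObjective q β (sharpened q β)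
    ∧ (regularizedObjective q β p = regularizedObjective q β (sharpened q β) ↔ p = sharpened q β)
  have hsum : ∑ y, p y = ∑ y, sharpened q β y := by rw [hpsum, sum_sharpened hqpos]
  have hr : ∀ y ∈ univ, 0 < sharpened q β y := fun y _ => sharpened_pos hqpos y
  have hp' : ∀ y ∈ univ, 0 ≤ p y := fun y _ => hp y
  have hself : ∑ y, sharpened q β y * log (sharpened q β y / sharpened q β y) = 0 :=
    (sum_mul_log_div_eq_zero_iff (fun y hy => (hr y hy).le) hr rfl).mpr fun _ _ => rfl
  rw [regularizedObjective_eq hqpos hβ.ne' hpsum,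
    regularizedObjective_eq hqpos hβ.ne' (sum_sharpened hqpos), hself, mul_zero, sub_zero,
    sub_le_self_iff, sub_eq_self, mul_eq_zero, or_iff_right hβ.ne',
    sum_mul_log_div_eq_zero_iff hp' hr hsum, funext_iff]
  exact ⟨mul_nonneg hβ.le (sum_mul_log_div_nonneg hp' hr hsum), by simp⟩

/-- The sharpened distribution `p_β*` is the unique maximizer of the entropy-regularized
objective `p ↦ Σ_y p(y) log q(y) − β · KL(p‖q)` over probability mass functions `p` on `Y`
(with the convention `0 · log 0 = 0`, which holds automatically since `Real.log 0 = 0`). -/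
theorem sharpened_is_unique_maximizer {Y : Type*} [Fintype Y] [Nonempty Y]
    (q : Y → ℝ) (β : ℝ) (hqpos : ∀ y, 0 < q y) (hqsum : ∑ y, q y = 1) (hβ : 0 < β)
    (p : Y → ℝ) (hp : ∀ y, 0 ≤ p y) (hpsum : ∑ y, p y = 1) :
    ((∑ y, p y * Real.log (q y)) - β * ∑ y, p y * Real.log (p y / q y)
        ≤ (∑ y, sharpened q β y * Real.log (q y))
          - β * ∑ y, sharpened q β y * Real.log (sharpened q β y / q y))
    ∧ ((∑ y, p y * Real.log (q y)) - β * ∑ y, p y * Real.log (p y / q y)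
        = (∑ y, sharpened q β y * Real.log (q y))
          - β * ∑ y, sharpened q β y * Real.log (sharpened q β y / q y)
        ↔ p = sharpened q β) :=
  sharpened_is_unique_maximizer_general q β hqpos hβ p hp hpsum
end

section
/- Suppose max_{y∈Y} |log(π(y)/π'(y))| ≤ ε, and let y, y' ∈ Y be such that |Δ^π(y,y')| ≤ B_c, |Δ^{π'}(y,y')| ≤ B_c, and |Δ^{π♯}(y,y')| ≤ B_c. Then |(Δ^π(y,y') − Δ^{π♯}(y,y'))² − (Δ^{π'}(y,y') − Δ^{π♯}(y,y'))²| ≤ 8·β·B_c·ε. -/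
/-- The pairwise reward difference
`Δ^p(y,y') = β [log(p(y)/π_ref(y)) − log(p(y')/π_ref(y'))]`. -/
noncomputable def pairDiff {Y : Type*} (πref : Y → ℝ) (β : ℝ) (p : Y → ℝ) (y y' : Y) : ℝ :=
  β * (Real.log (p y / πref y) - Real.log (p y' / πref y'))

/-! The difference of squares factors as `(a - b) (a + b - 2c)`. Clipping bounds the second
factor by `4 B_c`; in the first, `π_ref` cancels and `a - b` is `β` times a difference of two
log-ratios `log (π / π')`, each at most `ε` in absolute value. -/

theorem abs_sq_sub_sq_sub_le_of_abs_le {a b c B d : ℝ} (ha : |a| ≤ B) (hb : |b| ≤ B)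
    (hc : |c| ≤ B) (hab : |a - b| ≤ d) :
    |(a - c) ^ 2 - (b - c) ^ 2| ≤ 4 * B * d := by
  have hsum : |a + b - 2 * c| ≤ 4 * B := by
    calc |a + b - 2 * c| ≤ |a| + |b| + |2 * c| :=
          (abs_sub _ _).trans (add_le_add_left (abs_add_le a b) _)
      _ = |a| + |b| + 2 * |c| := by rw [abs_mul, abs_two]
      _ ≤ 4 * B := by linarith
  calc |(a - c) ^ 2 - (b - c) ^ 2| = |a + b - 2 * c| * |a - b| := by
        rw [← abs_mul]; congr 1; ring
    _ ≤ 4 * B * d := mul_le_mul hsum hab (abs_nonneg _) (by linarith [abs_nonneg c])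

section pairDiff

variable {Y : Type*} {πref p q : Y → ℝ} {β : ℝ} {y y' : Y}

theorem pairDiff_sub_pairDiff (href : ∀ x, πref x ≠ 0) (hp : ∀ x, p x ≠ 0)
    (hq : ∀ x, q x ≠ 0) :
    pairDiff πref β p y y' - pairDiff πref β q y y' =
      β * (Real.log (p y / q y) - Real.log (p y' / q y')) := by
  simp only [pairDiff, Real.log_div (hp _) (href _), Real.log_div (hq _) (href _),
    Real.log_div (hp _) (hq _)]
  ring

theorem abs_pairDiff_sub_pairDiff_le {ε : ℝ} (hβ : 0 ≤ β) (href : ∀ x, πref x ≠ 0)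
    (hp : ∀ x, p x ≠ 0) (hq : ∀ x, q x ≠ 0) (hclose : ∀ x, |Real.log (p x / q x)| ≤ ε) :
    |pairDiff πref β p y y' - pairDiff πref β q y y'| ≤ β * (2 * ε) := by
  rw [pairDiff_sub_pairDiff href hp hq, abs_mul, abs_of_nonneg hβ]
  gcongr
  calc |Real.log (p y / q y) - Real.log (p y' / q y')|
      ≤ |Real.log (p y / q y)| + |Real.log (p y' / q y')| := abs_sub _ _
    _ ≤ 2 * ε := by linarith [hclose y, hclose y']

end pairDiff

theorem clipped_squared_loss_lipschitz_general {Y : Type*}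
    (πref π π' πs : Y → ℝ)
    (hπref : ∀ y, 0 < πref y) (hπ : ∀ y, 0 < π y) (hπ' : ∀ y, 0 < π' y)
    (β Bc ε : ℝ) (hβ : 0 < β)
    (hclose : ∀ y, |Real.log (π y / π' y)| ≤ ε)
    (y y' : Y)
    (h1 : |pairDiff πref β π y y'| ≤ Bc)
    (h2 : |pairDiff πref β π' y y'| ≤ Bc)
    (h3 : |pairDiff πref β πs y y'| ≤ Bc) :
    |(pairDiff πref β π y y' - pairDiff πref β πs y y') ^ 2 -
        (pairDiff πref β π' y y' - pairDiff πref β πs y y') ^ 2| ≤ 8 * β * Bc * ε := by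
  have hdiff := abs_pairDiff_sub_pairDiff_le (y := y) (y' := y') hβ.le
    (fun x ↦ (hπref x).ne') (fun x ↦ (hπ x).ne') (fun x ↦ (hπ' x).ne') hclose
  calc _ ≤ 4 * Bc * (β * (2 * ε)) := abs_sq_sub_sq_sub_le_of_abs_le h1 h2 h3 hdiff
    _ = 8 * β * Bc * ε := by ring

/-- Lipschitz-like property of the clipped squared loss: if `π` and `π'` are `ε`-close in
the sup log-ratio metric and all pairwise differences are clipped at `B_c`, then the
squared losses differ by at most `8βB_cε`. -/
theorem clipped_squared_loss_lipschitz {Y : Type*} [Fintype Y] [Nonempty Y]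
    (πref π π' πs : Y → ℝ)
    (hπref : ∀ y, 0 < πref y) (hπ : ∀ y, 0 < π y) (hπ' : ∀ y, 0 < π' y)
    (hπs : ∀ y, 0 < πs y)
    (hπrefsum : ∑ y, πref y = 1) (hπsum : ∑ y, π y = 1) (hπ'sum : ∑ y, π' y = 1)
    (hπssum : ∑ y, πs y = 1)
    (β Bc ε : ℝ) (hβ : 0 < β) (hBc : 0 < Bc) (hε : 0 < ε)
    (hclose : ∀ y, |Real.log (π y / π' y)| ≤ ε)
    (y y' : Y)
    (h1 : |pairDiff πref β π y y'| ≤ Bc)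
    (h2 : |pairDiff πref β π' y y'| ≤ Bc)
    (h3 : |pairDiff πref β πs y y'| ≤ Bc) :
    |(pairDiff πref β π y y' - pairDiff πref β πs y y') ^ 2 -
        (pairDiff πref β π' y y' - pairDiff πref β πs y y') ^ 2| ≤ 8 * β * Bc * ε :=
  clipped_squared_loss_lipschitz_general πref π π' πs hπref hπ hπ' β Bc ε hβ hclose y y' h1 h2 h3
end

section
/- Let C > 0, α > 0, and 0 < λ ≤ C, and suppose the nonnegative reals λ₁, …, λ_d satisfy the exponential decay condition λᵢ ≤ C·e^{−α·i} for every i = 1, …, d. Then the ridge effective dimension satisfies d_eff(λ) ≤ (1/α)·log(C/λ) + 1 + 1/(e^α − 1). -/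
/-!
Each summand `λᵢ/(λᵢ + λ)` is at most `1` and at most `λᵢ/λ ≤ e^{α(T - i - 1)}`, where
`T = (1/α) log(C/λ)`. Bounding the first `⌊T⌋` summands by `1` and the rest by the geometric
tail `Σ_{k ≥ 0} e^{-αk} = 1 + 1/(e^α - 1)` gives the claim.
-/

/-- The ridge effective dimension `d_eff(λ) = Σᵢ λᵢ/(λᵢ + λ)`. -/
noncomputable def dEff {d : ℕ} (lam : Fin d → ℝ) (l : ℝ) : ℝ :=
  ∑ i, lam i / (lam i + l)

open Finset Real

lemma div_add_le_min_one_div {a b : ℝ} (ha : 0 ≤ a) (hb : 0 < b) :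
    a / (a + b) ≤ min 1 (a / b) :=
  le_min ((div_le_one (by positivity)).mpr (by linarith))
    (div_le_div_of_nonneg_left ha hb (by linarith))

lemma sum_range_le_of_le_one_of_le_pow_sub {f : ℕ → ℝ} {r : ℝ} (hr0 : 0 ≤ r) (hr1 : r < 1)
    (N d : ℕ) (h_one : ∀ i, f i ≤ 1) (h_geom : ∀ i, N ≤ i → f i ≤ r ^ (i - N)) :
    ∑ i ∈ range d, f i ≤ N + (1 - r)⁻¹ := by
  have h_head : ∀ n, ∑ i ∈ range n, f i ≤ n := fun n => by
    simpa using sum_le_card_nsmul (range n) f 1 fun i _ => h_one i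
  have h_tail_nonneg : 0 ≤ (1 - r)⁻¹ := inv_nonneg.mpr (by linarith)
  rcases le_total d N with hdN | hNd
  · linarith [h_head d, (by exact_mod_cast hdN : (d : ℝ) ≤ N)]
  have h_tail : ∑ i ∈ Ico N d, f i ≤ (1 - r)⁻¹ :=
    calc ∑ i ∈ Ico N d, f i ≤ ∑ k ∈ range (d - N), r ^ k := by
          rw [sum_Ico_eq_sum_range]
          exact sum_le_sum fun k _ => by simpa using h_geom (N + k) (Nat.le_add_right N k)
      _ ≤ (1 - r)⁻¹ := by
          simpa only [← range_eq_Ico, pow_zero, one_div] using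
            geom_sum_Ico_le_of_lt_one (m := 0) (n := d - N) hr0 hr1
  rw [← sum_range_add_sum_Ico _ hNd]
  linarith [h_head N]

lemma exp_mul_sub_le_exp_neg_pow_sub_floor {α : ℝ} (hα : 0 ≤ α) (T : ℝ) {i : ℕ}
    (hi : ⌊T⌋₊ ≤ i) : exp (α * (T - (i + 1))) ≤ exp (-α) ^ (i - ⌊T⌋₊) := by
  rw [← exp_nat_mul, exp_le_exp, Nat.cast_sub hi]
  nlinarith [Nat.lt_floor_add_one T]

lemma inv_one_sub_exp_neg {α : ℝ} (hα : 0 < α) :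
    (1 - exp (-α))⁻¹ = 1 + 1 / (exp α - 1) := by
  have : exp α - 1 ≠ 0 := (sub_pos.mpr (one_lt_exp_iff.mpr hα)).ne'
  rw [exp_neg]
  field_simp
  ring

/-- Effective dimension under exponential spectral decay: if `λᵢ ≤ C e^{−αi}` for
`i = 1, …, d` and `0 < λ ≤ C`, then
`d_eff(λ) ≤ (1/α) log(C/λ) + 1 + 1/(e^α − 1)`. -/
theorem dEff_exponential_decay (d : ℕ) (C α l : ℝ)
    (hC : 0 < C) (hα : 0 < α) (hl : 0 < l) (hlC : l ≤ C)
    (lam : Fin d → ℝ) (hnn : ∀ i, 0 ≤ lam i)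
    (hdecay : ∀ i : Fin d, lam i ≤ C * Real.exp (-α * ((i : ℕ) + 1))) :
    dEff lam l ≤ (1 / α) * Real.log (C / l) + 1 + 1 / (Real.exp α - 1) := by
  set T := 1 / α * log (C / l)
  have hT : 0 ≤ T := mul_nonneg (by positivity) (log_nonneg ((one_le_div hl).mpr hlC))
  have hexpT : exp (α * T) = C / l := by
    rw [show α * T = log (C / l) by simp only [T]; field_simp, exp_log (by positivity)]
  let g : ℕ → ℝ := fun i => min 1 (exp (α * (T - (i + 1))))
  have hterm : ∀ i : Fin d, lam i / (lam i + l) ≤ g i := fun i =>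
    calc lam i / (lam i + l) ≤ min 1 (lam i / l) := div_add_le_min_one_div (hnn i) hl
      _ ≤ min 1 (C * exp (-α * ((i : ℕ) + 1)) / l) := by gcongr; exact hdecay i
      _ = g i := by
          rw [mul_div_right_comm, ← hexpT, ← exp_add]
          simp only [g]
          ring_nf
  calc dEff lam l ≤ ∑ i ∈ range d, g i := by
        rw [dEff, ← Fin.sum_univ_eq_sum_range]
        exact sum_le_sum fun i _ => hterm i
    _ ≤ ⌊T⌋₊ + (1 - exp (-α))⁻¹ :=
        sum_range_le_of_le_one_of_le_pow_sub (exp_nonneg _) (exp_lt_one_iff.mpr (by linarith)) _ _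
          (fun _ => min_le_left _ _)
          fun _ hi => (min_le_right _ _).trans (exp_mul_sub_le_exp_neg_pow_sub_floor hα.le T hi)
    _ ≤ T + (1 + 1 / (exp α - 1)) := by rw [inv_one_sub_exp_neg hα]; gcongr; exact Nat.floor_le hT
    _ = T + 1 + 1 / (exp α - 1) := by ring
end

section
/- Let C > 0, p > 1, and λ > 0, and suppose the nonnegative reals λ₁, …, λ_d satisfy the polynomial decay condition λᵢ ≤ C·i^{−p} for every i = 1, …, d. Then the ridge effective dimension satisfies d_eff(λ) ≤ (p/(p−1))·( (C/λ)^{1/p} + 1 ). -/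
/-!
Each summand `λᵢ/(λᵢ + λ)` is at most `min 1 ((C/λ) i^{-p})`. Put `t = (C/λ)^{1/p}` and
`m = ⌈t⌉`: the first `m` summands contribute at most `m ≤ t + 1`, and comparing the rest with
`(C/λ) ∫_m^∞ x^{-p} dx = (C/λ) m^{1-p}/(p-1) ≤ t/(p-1)` gives the bound.
-/

open Finset Real

lemma div_add_le_min_one_div_s16 {x l : ℝ} (hx : 0 ≤ x) (hl : 0 < l) :
    x / (x + l) ≤ min 1 (x / l) :=
  le_min ((div_le_one (by positivity)).2 (by linarith))
    (div_le_div_of_nonneg_left hx hl (by linarith))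

lemma sum_range_le_add_sum_Ico {f : ℕ → ℝ} (hf : ∀ n, f n ≤ 1) (m d : ℕ) :
    ∑ n ∈ range d, f n ≤ m + ∑ n ∈ Ico m d, f n := by
  have sum_le_card (k : ℕ) : ∑ n ∈ range k, f n ≤ k := by
    simpa using sum_le_sum fun n (_ : n ∈ range k) => hf n
  rcases le_total m d with hmd | hdm
  · rw [← sum_range_add_sum_Ico f hmd]
    exact add_le_add_left (sum_le_card m) _
  · rw [Ico_eq_empty_of_le hdm, sum_empty, add_zero]
    exact (sum_le_card d).trans (by exact_mod_cast hdm)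

lemma sum_Ico_rpow_neg_le {p : ℝ} (hp : 1 < p) {m : ℕ} (hm : 0 < m) (d : ℕ) :
    ∑ n ∈ Ico m d, ((n : ℝ) + 1) ^ (-p) ≤ (m : ℝ) ^ (1 - p) / (p - 1) := by
  have hm' : (0 : ℝ) < m := by exact_mod_cast hm
  have hp1 : 0 < p - 1 := sub_pos.2 hp
  have hbound : 0 ≤ (m : ℝ) ^ (1 - p) / (p - 1) := by positivity
  rcases le_total m d with hmd | hdm
  swap
  · simpa [Ico_eq_empty_of_le hdm] using hbound
  have hmd' : (m : ℝ) ≤ d := by exact_mod_cast hmd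
  have hanti : AntitoneOn (fun x : ℝ => x ^ (-p)) (Set.Icc m d) :=
    (antitoneOn_rpow_Ioi_of_exponent_nonpos (by linarith)).mono
      fun x hx => hm'.trans_le hx.1
  have hzero : (0 : ℝ) ∉ Set.uIcc (m : ℝ) d := by
    rw [Set.uIcc_of_le hmd']
    exact fun h => hm'.not_ge h.1
  calc ∑ n ∈ Ico m d, ((n : ℝ) + 1) ^ (-p)
      = ∑ n ∈ Ico m d, ((n + 1 : ℕ) : ℝ) ^ (-p) := by push_cast; rfl
    _ ≤ ∫ x in (m : ℝ)..d, x ^ (-p) := hanti.sum_le_integral_Ico hmd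
    _ = ((d : ℝ) ^ (1 - p) - (m : ℝ) ^ (1 - p)) / (1 - p) := by
      rw [integral_rpow (Or.inr ⟨by linarith, hzero⟩), neg_add_eq_sub]
    _ = ((m : ℝ) ^ (1 - p) - (d : ℝ) ^ (1 - p)) / (p - 1) := by
      rw [← neg_div_neg_eq, neg_sub, neg_sub]
    _ ≤ (m : ℝ) ^ (1 - p) / (p - 1) := by
      gcongr
      linarith [rpow_nonneg (Nat.cast_nonneg d) (1 - p)]

lemma sum_range_min_one_mul_rpow_neg_le {a p : ℝ} (ha : 0 < a) (hp : 1 < p) (d : ℕ) :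
    ∑ n ∈ range d, min 1 (a * ((n : ℝ) + 1) ^ (-p)) ≤ p / (p - 1) * (a ^ (1 / p) + 1) := by
  have hp0 : p ≠ 0 := by positivity
  have ha_eq : (a ^ (1 / p)) ^ p = a := by
    rw [← rpow_mul ha.le, one_div_mul_cancel hp0, rpow_one]
  set t := a ^ (1 / p)
  have ht : 0 < t := rpow_pos_of_pos ha _
  set m := ⌈t⌉₊
  have hm : 0 < m := Nat.ceil_pos.2 ht
  have hmt : (m : ℝ) ≤ t + 1 := (Nat.ceil_lt_add_one ht.le).le
  have htail : a * (m : ℝ) ^ (1 - p) ≤ t :=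
    calc a * (m : ℝ) ^ (1 - p) ≤ t ^ p * t ^ (1 - p) := by
          rw [ha_eq]
          exact mul_le_mul_of_nonneg_left
            (rpow_le_rpow_of_nonpos ht (Nat.le_ceil t) (by linarith)) ha.le
      _ = t := by rw [← rpow_add ht, add_sub_cancel, rpow_one]
  have hp1 : 0 < p - 1 := sub_pos.2 hp
  calc ∑ n ∈ range d, min 1 (a * ((n : ℝ) + 1) ^ (-p))
      ≤ m + ∑ n ∈ Ico m d, min 1 (a * ((n : ℝ) + 1) ^ (-p)) :=
        sum_range_le_add_sum_Ico (fun _ => min_le_left _ _) m d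
    _ ≤ m + a * ((m : ℝ) ^ (1 - p) / (p - 1)) := by
        gcongr
        calc ∑ n ∈ Ico m d, min 1 (a * ((n : ℝ) + 1) ^ (-p))
            ≤ ∑ n ∈ Ico m d, a * ((n : ℝ) + 1) ^ (-p) := sum_le_sum fun n _ => min_le_right _ _
          _ = a * ∑ n ∈ Ico m d, ((n : ℝ) + 1) ^ (-p) := (mul_sum ..).symm
          _ ≤ a * ((m : ℝ) ^ (1 - p) / (p - 1)) := by gcongr; exact sum_Ico_rpow_neg_le hp hm d
    _ ≤ (t + 1) + t / (p - 1) := by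
        rw [← mul_div_assoc]
        gcongr
    _ ≤ (t + 1) + (t + 1) / (p - 1) := by gcongr; linarith
    _ = p / (p - 1) * (t + 1) := by
        field_simp
        ring

/-- Effective dimension under polynomial spectral decay: if `λᵢ ≤ C i^{−p}` for
`i = 1, …, d` with `p > 1`, then `d_eff(λ) ≤ (p/(p−1)) ((C/λ)^{1/p} + 1)`. -/
theorem dEff_polynomial_decay (d : ℕ) (C p l : ℝ)
    (hC : 0 < C) (hp : 1 < p) (hl : 0 < l)
    (lam : Fin d → ℝ) (hnn : ∀ i, 0 ≤ lam i)
    (hdecay : ∀ i : Fin d, lam i ≤ C * (((i : ℕ) + 1 : ℝ)) ^ (-p)) :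
    dEff lam l ≤ (p / (p - 1)) * ((C / l) ^ (1 / p) + 1) := by
  have hterm (i : Fin d) :
      lam i / (lam i + l) ≤ min 1 (C / l * (((i : ℕ) : ℝ) + 1) ^ (-p)) := by
    refine (div_add_le_min_one_div_s16 (hnn i) hl).trans (min_le_min_left 1 ?_)
    rw [div_mul_eq_mul_div]
    exact div_le_div_of_nonneg_right (hdecay i) hl.le
  calc dEff lam l
      ≤ ∑ i : Fin d, min 1 (C / l * (((i : ℕ) : ℝ) + 1) ^ (-p)) := sum_le_sum fun i _ => hterm i
    _ = ∑ n ∈ range d, min 1 (C / l * ((n : ℝ) + 1) ^ (-p)) :=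
        Fin.sum_univ_eq_sum_range (fun n => min 1 (C / l * ((n : ℝ) + 1) ^ (-p))) d
    _ ≤ p / (p - 1) * ((C / l) ^ (1 / p) + 1) :=
        sum_range_min_one_mul_rpow_neg_le (div_pos hC hl) hp d
end

section
/- Let X₁, …, X_n be independent identically distributed real random variables on a probability space with 0 ≤ Xᵢ ≤ M almost surely, where M > 0 and n ≥ 1, and let δ ∈ (0,1). Then P( E[X₁] > (2/n)·Σ_{i=1}^n Xᵢ + 4·M·log(1/δ)/n ) ≤ δ. -/
/-!
Chernoff's bound for the lower tail, at the parameter `t = -1/M`. For `0 ≤ x ≤ M` one has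
`exp (-x/M) ≤ 1 - x/(2M)`, so each factor of the moment generating function of the sum is at most
`exp (-E[Xᵢ]/(2M))`, and the event `E[X₁] > (2/n) ∑ Xᵢ + 4M log(1/δ)/n` has probability at most
`δ² ≤ δ`.
-/

open MeasureTheory ProbabilityTheory Real Set

lemma Real.exp_neg_le_one_sub_half {x : ℝ} (h0 : 0 ≤ x) (h1 : x ≤ 1) :
    exp (-x) ≤ 1 - x / 2 := by
  rw [exp_neg, inv_le_iff_one_le_mul₀ (exp_pos x)]
  nlinarith [add_one_le_exp x]

namespace ProbabilityTheory

variable {Ω : Type*} [MeasurableSpace Ω] {P : Measure Ω} [IsProbabilityMeasure P] {M : ℝ}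

lemma mgf_neg_inv_le_of_mem_Icc {Y : Ω → ℝ} (hY : AEMeasurable Y P)
    (hbound : ∀ᵐ ω ∂P, Y ω ∈ Icc 0 M) (hM : 0 < M) :
    mgf Y P (-M⁻¹) ≤ exp (-(P[Y] / (2 * M))) := by
  have hint : Integrable Y P := .of_mem_Icc 0 M hY hbound
  have hpointwise : ∀ᵐ ω ∂P, exp (-M⁻¹ * Y ω) ≤ 1 - Y ω / (2 * M) := by
    filter_upwards [hbound] with ω ⟨h0, h1⟩
    have hx1 : Y ω / M ≤ 1 := (div_le_one hM).2 h1
    calc exp (-M⁻¹ * Y ω) = exp (-(Y ω / M)) := by ring_nf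
      _ ≤ 1 - Y ω / M / 2 := exp_neg_le_one_sub_half (div_nonneg h0 hM.le) hx1
      _ = 1 - Y ω / (2 * M) := by ring
  calc mgf Y P (-M⁻¹) ≤ ∫ ω, (1 - Y ω / (2 * M)) ∂P :=
        integral_mono_ae (integrable_exp_mul_of_mem_Icc hY hbound)
          ((integrable_const 1).sub (hint.div_const _)) hpointwise
    _ = 1 - P[Y] / (2 * M) := by
        rw [integral_sub (integrable_const 1) (hint.div_const _), integral_div]
        simp
    _ ≤ exp (-(P[Y] / (2 * M))) := by linarith [add_one_le_exp (-(P[Y] / (2 * M)))]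

lemma measureReal_sum_le_le_of_mem_Icc {ι : Type*} [Fintype ι] {X : ι → Ω → ℝ}
    (hmeas : ∀ i, Measurable (X i)) (hindep : iIndepFun X P)
    (hbound : ∀ i, ∀ᵐ ω ∂P, X i ω ∈ Icc 0 M) (hM : 0 < M) (ε : ℝ) :
    P.real {ω | ∑ i, X i ω ≤ ε} ≤ exp ((ε - (∑ i, P[X i]) / 2) / M) := by
  have hint : Integrable (fun ω ↦ exp (-M⁻¹ * (∑ i, X i) ω)) P :=
    hindep.integrable_exp_mul_sum hmeas fun i _ ↦
      integrable_exp_mul_of_mem_Icc (hmeas i).aemeasurable (hbound i)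
  have hmgf : mgf (∑ i, X i) P (-M⁻¹) ≤ exp (-((∑ i, P[X i]) / (2 * M))) := by
    rw [hindep.mgf_sum hmeas, Finset.sum_div, ← Finset.sum_neg_distrib, exp_sum]
    exact Finset.prod_le_prod (fun _ _ ↦ mgf_nonneg) fun i _ ↦
      mgf_neg_inv_le_of_mem_Icc (hmeas i).aemeasurable (hbound i) hM
  calc P.real {ω | ∑ i, X i ω ≤ ε}
      = P.real {ω | (∑ i, X i) ω ≤ ε} := by simp only [Finset.sum_apply]
    _ ≤ exp (-(-M⁻¹) * ε) * mgf (∑ i, X i) P (-M⁻¹) :=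
        measure_le_le_exp_mul_mgf ε (by simp [hM.le]) hint
    _ ≤ exp (-(-M⁻¹) * ε) * exp (-((∑ i, P[X i]) / (2 * M))) := by gcongr
    _ = exp ((ε - (∑ i, P[X i]) / 2) / M) := by
        rw [← exp_add]
        congr 1
        field_simp
        ring

end ProbabilityTheory

/-- Empirical (fixed-point) form of Bernstein's inequality for i.i.d. `[0,M]`-valued
random variables: with probability at least `1 − δ`,
`E[X₁] ≤ (2/n) Σᵢ Xᵢ + 4 M log(1/δ)/n`. -/
theorem empirical_bernstein
    {Ω : Type*} [MeasurableSpace Ω] (P : Measure Ω) [IsProbabilityMeasure P]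
    (n : ℕ) (hn : 1 ≤ n) (M : ℝ) (hM : 0 < M)
    (X : Fin n → Ω → ℝ) (hmeas : ∀ i, Measurable (X i))
    (hindep : iIndepFun X P)
    (hident : ∀ i, IdentDistrib (X i) (X ⟨0, hn⟩) P P)
    (hbound : ∀ i, ∀ᵐ ω ∂P, X i ω ∈ Set.Icc (0 : ℝ) M)
    (δ : ℝ) (hδ : δ ∈ Set.Ioo (0 : ℝ) 1) :
    (P {ω | (∫ ω', X ⟨0, hn⟩ ω' ∂P) >
        (2 / n) * ∑ i, X i ω + 4 * M * Real.log (1 / δ) / n}).toReal ≤ δ := by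
  obtain ⟨hδ0, hδ1⟩ := hδ
  set μ := ∫ ω', X ⟨0, hn⟩ ω' ∂P
  set L := Real.log (1 / δ)
  have hn0 : (0 : ℝ) < n := by exact_mod_cast hn
  have hmean : ∑ i, P[X i] = n * μ := by
    simp [fun i ↦ (hident i).integral_eq, μ]
  have hevent : {ω | μ > (2 / n) * ∑ i, X i ω + 4 * M * L / n} ⊆
      {ω | ∑ i, X i ω ≤ n * μ / 2 - 2 * M * L} := fun ω hω ↦ by
    simp only [mem_ofPred_eq, gt_iff_lt] at hω ⊢
    rw [div_mul_eq_mul_div, ← add_div, div_lt_iff₀ hn0] at hω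
    linarith
  have hexp : exp (-2 * L) = δ ^ 2 := by
    simp only [L]
    rw [one_div, log_inv, neg_mul_neg, two_mul, exp_add, exp_log hδ0, sq]
  calc P.real {ω | μ > (2 / n) * ∑ i, X i ω + 4 * M * L / n}
      ≤ P.real {ω | ∑ i, X i ω ≤ n * μ / 2 - 2 * M * L} := measureReal_mono hevent
    _ ≤ exp ((n * μ / 2 - 2 * M * L - (∑ i, P[X i]) / 2) / M) :=
        measureReal_sum_le_le_of_mem_Icc hmeas hindep hbound hM _
    _ = δ ^ 2 := by rw [hmean, ← hexp]; congr 1; field_simp; ring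
    _ ≤ δ := by nlinarith
end
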